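/- Let M ≥ 1 be an integer, α a real with 0 < α < 1, t₁, t₂ ≥ 0 reals, n₁, n₂ ≥ M+1 integers, and x₁, x₂ ∈ ℤ. Assume either n₁ ≥ n₂, or (n₁ ≤ n₂ and t₁ ≥ t₂), and let 𝟙 := 1 if n₁ ≤ n₂, t₁ ≥ t₂ and (n₁,t₁) ≠ (n₂,t₂), and 𝟙 := 0 otherwise. Then −𝟙·φ(x₁,x₂) + ∑_{k=M+1}^{n₂} Ψ^{n₁,t₁}_{n₁-k}(x₁)·Φ^{n₂,t₂}_{n₂-k}(x₂) = −𝟙·φ̂(x₁,x₂) + (1/(2πi))² ∮ dv ∮ (dw/w) e^{t₁w}(w(w−1))^{n₁−M} w^{−(x₁+2n₁−2M)} · (1+v)^{x₂+2n₂−2M} e^{−t₂(v+1)}(v(v+1))^{−(n₂−M)} · (1+2v)/((w+v)(w−v−1)), where in the double integral the v-contour encloses exactly 0 and, for each v, the w-contour encloses exactly 0 and −v (in particular it does not enclose the pole w = v+1). -/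

import Mathlib

/-!
Summing the geometric series in `k` turns `∑ₖ Ψₖ Φₖ` into a double integral, over `|v| = ρ` and
`|w| = 2`, of `K1Int` minus a tail `K1Tail` in which the pole at `v = 0` has cancelled, so the
tail integrates to zero. For fixed `v`, shrinking `|w| = 2` to small circles around `0` and `-v`
leaves the residue of `K1Int` at `w = v + 1`, which is `phiIntegrand (1 + v)`; integrated over `v`
it becomes the integral of `phiIntegrand` around `1`, that is `φ - φ̂`. When `𝟙 = 0` the hypothesis
on `(n₁, t₁)` and `(n₂, t₂)` forces `n₂ ≤ n₁`, so `phiIntegrand` has no pole at `1` and `φ = φ̂`.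
-/

open Complex Real MeasureTheory
open scoped Classical

noncomputable section

/-- `Ψ^{n,t}_{n-j}(x)` for `j ≥ M+1` (used for all `j = M+1,…,n₂`, including `j > n`):
contour is the circle `|w| = 2` (the value is independent of the radius `R > 1`, and the
circle encloses the pole at `w = 1` appearing when `j > n`). -/
def Psi (M : ℕ) (n j : ℕ) (t : ℝ) (x : ℤ) : ℂ :=
  (2 * (π : ℂ) * I)⁻¹ * ∮ w in C((0 : ℂ), 2),
    w⁻¹ * (w * (w - 1)) ^ ((n : ℤ) - (j : ℤ)) * Complex.exp ((t : ℂ) * w) *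
      w ^ (-(x + 2 * (n : ℤ) - 2 * (M : ℤ)))

/-- `Φ^{n,t}_{n-j}(x)` for `j ≥ M+1`: single integral over a circle of radius `r`
around `0` (enclosing exactly `0`). -/
def Phi (M : ℕ) (n j : ℕ) (t : ℝ) (r : ℝ) (x : ℤ) : ℂ :=
  (2 * (π : ℂ) * I)⁻¹ * ∮ v in C((0 : ℂ), r),
    (1 + 2 * v) * (1 + v) ^ (x + 2 * (n : ℤ) - 2 * (M : ℤ)) *
      Complex.exp (-((t : ℂ) * (v + 1))) * (v * (1 + v)) ^ (-((n : ℤ) - (j : ℤ) + 1))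

/-- `φ(x₁,x₂)`: integral over the circle `|w| = 2` (any radius `R > 1`). -/
def phi (n₁ n₂ : ℕ) (t₁ t₂ : ℝ) (x₁ x₂ : ℤ) : ℂ :=
  (2 * (π : ℂ) * I)⁻¹ * ∮ w in C((0 : ℂ), 2),
    w⁻¹ * Complex.exp (((t₁ - t₂ : ℝ) : ℂ) * w) *
      w ^ (-(x₁ + (n₁ : ℤ) - x₂ - (n₂ : ℤ))) * (w - 1) ^ ((n₁ : ℤ) - (n₂ : ℤ))

/-- `φ̂(x₁,x₂)`: integral over a circle of radius `r` around `0` (enclosing exactly `0`). -/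
def phiHat (n₁ n₂ : ℕ) (t₁ t₂ : ℝ) (x₁ x₂ : ℤ) (r : ℝ) : ℂ :=
  (2 * (π : ℂ) * I)⁻¹ * ∮ w in C((0 : ℂ), r),
    w⁻¹ * Complex.exp (((t₁ - t₂ : ℝ) : ℂ) * w) * (w * (w - 1)) ^ ((n₁ : ℤ) - (n₂ : ℤ)) *
      w ^ (-(x₁ + 2 * (n₁ : ℤ) - x₂ - 2 * (n₂ : ℤ)))

/-- Integrand of the double contour integral on the right-hand side. -/
def K1Int (M : ℕ) (n₁ n₂ : ℕ) (t₁ t₂ : ℝ) (x₁ x₂ : ℤ) (v w : ℂ) : ℂ :=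
  w⁻¹ * Complex.exp ((t₁ : ℂ) * w) * (w * (w - 1)) ^ ((n₁ : ℤ) - (M : ℤ)) *
    w ^ (-(x₁ + 2 * (n₁ : ℤ) - 2 * (M : ℤ))) *
    (1 + v) ^ (x₂ + 2 * (n₂ : ℤ) - 2 * (M : ℤ)) * Complex.exp (-((t₂ : ℂ) * (v + 1))) *
    (v * (v + 1)) ^ (-((n₂ : ℤ) - (M : ℤ))) * (1 + 2 * v) / ((w + v) * (w - v - 1))

open Metric Set

section CircleIntegrals

variable {E : Type*} [NormedAddCommGroup E]

theorem continuous_circleMap_prodMap {f : ℂ → ℂ → E} {c₁ c₂ : ℂ} {R₁ R₂ : ℝ} (hR₁ : 0 ≤ R₁)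
    (hR₂ : 0 ≤ R₂) (hf : ContinuousOn (Function.uncurry f) (sphere c₁ R₁ ×ˢ sphere c₂ R₂)) :
    Continuous fun p : ℝ × ℝ => f (circleMap c₁ R₁ p.1) (circleMap c₂ R₂ p.2) :=
  hf.comp_continuous (((continuous_circleMap c₁ R₁).comp continuous_fst).prodMk
    ((continuous_circleMap c₂ R₂).comp continuous_snd))
    fun p => ⟨circleMap_mem_sphere c₁ hR₁ p.1, circleMap_mem_sphere c₂ hR₂ p.2⟩

variable [NormedSpace ℂ E]

theorem intervalIntegral_integral_swap_of_continuous {F : ℝ → ℝ → E}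
    (hF : Continuous (Function.uncurry F)) {a b c d : ℝ} (hab : a ≤ b) (hcd : c ≤ d) :
    ∫ x in a..b, ∫ y in c..d, F x y = ∫ y in c..d, ∫ x in a..b, F x y := by
  simp only [intervalIntegral.integral_of_le hab, intervalIntegral.integral_of_le hcd]
  refine integral_integral_swap ?_
  rw [Measure.prod_restrict]
  exact (hF.continuousOn.integrableOn_compact (isCompact_Icc.prod isCompact_Icc)).mono_set
    (prod_mono Ioc_subset_Icc_self Ioc_subset_Icc_self)

theorem circleIntegral_comm {f : ℂ → ℂ → E} {c₁ c₂ : ℂ} {R₁ R₂ : ℝ} (hR₁ : 0 ≤ R₁)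
    (hR₂ : 0 ≤ R₂) (hf : ContinuousOn (Function.uncurry f) (sphere c₁ R₁ ×ˢ sphere c₂ R₂)) :
    (∮ z in C(c₁, R₁), ∮ w in C(c₂, R₂), f z w) = ∮ w in C(c₂, R₂), ∮ z in C(c₁, R₁), f z w := by
  have hF : Continuous (Function.uncurry fun θ φ => deriv (circleMap c₁ R₁) θ •
      deriv (circleMap c₂ R₂) φ • f (circleMap c₁ R₁ θ) (circleMap c₂ R₂ φ)) := by
    simp only [deriv_circleMap]
    exact (((continuous_circleMap 0 R₁).comp continuous_fst).mul continuous_const).smul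
      ((((continuous_circleMap 0 R₂).comp continuous_snd).mul continuous_const).smul
        (continuous_circleMap_prodMap hR₁ hR₂ hf))
  simp only [circleIntegral, ← intervalIntegral.integral_smul]
  rw [intervalIntegral_integral_swap_of_continuous hF two_pi_pos.le two_pi_pos.le]
  simp only [smul_comm (deriv (circleMap c₁ R₁) _)]

theorem circleIntegrable_circleIntegral {f : ℂ → ℂ → E} {c₁ c₂ : ℂ} {R₁ R₂ : ℝ} (hR₁ : 0 ≤ R₁)
    (hR₂ : 0 ≤ R₂) (hf : ContinuousOn (Function.uncurry f) (sphere c₁ R₁ ×ˢ sphere c₂ R₂)) :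
    CircleIntegrable (fun z => ∮ w in C(c₂, R₂), f z w) c₁ R₁ := by
  have hF : Continuous fun p : ℝ × ℝ =>
      deriv (circleMap c₂ R₂) p.2 • f (circleMap c₁ R₁ p.1) (circleMap c₂ R₂ p.2) := by
    simp only [deriv_circleMap]
    exact (((continuous_circleMap 0 R₂).comp continuous_snd).mul continuous_const).smul
      (continuous_circleMap_prodMap hR₁ hR₂ hf)
  exact (intervalIntegral.continuous_parametric_intervalIntegral_of_continuous' hF _ _)
    |>.intervalIntegrable _ _

theorem circleIntegral_comp_add_left (f : ℂ → E) (c : ℂ) (R : ℝ) :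
    (∮ z in C(0, R), f (c + z)) = ∮ w in C(c, R), f w := by
  simp only [circleIntegral, deriv_circleMap, circleMap, zero_add]

theorem circleIntegral_eq_of_differentiableOn_annulus {f : ℂ → E} {c : ℂ} {r R : ℝ}
    (hr : 0 < r) (hrR : r ≤ R) (hf : DifferentiableOn ℂ f (closedBall c R \ ball c r)) :
    (∮ z in C(c, R), f z) = ∮ z in C(c, r), f z :=
  circleIntegral_eq_of_differentiable_on_annulus_off_countable hr hrR countable_empty
    hf.continuousOn fun _ hz => hf.differentiableAt <| Filter.mem_of_superset
      ((isOpen_ball.sdiff isClosed_closedBall).mem_nhds hz.1)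
      (sdiff_subset_sdiff ball_subset_closedBall ball_subset_closedBall)

theorem circleIntegral_sub_zpow_eq_of_mem_ball (m : ℤ) {c u : ℂ} {R s : ℝ}
    (hu : u ∈ ball c R) (hs : 0 < s) :
    (∮ w in C(c, R), (w - u) ^ m) = ∮ w in C(u, s), (w - u) ^ m := by
  by_cases hm : m = -1
  · subst hm
    simp only [zpow_neg_one]
    rw [circleIntegral.integral_sub_inv_of_mem_ball hu,
      circleIntegral.integral_sub_inv_of_mem_ball (mem_ball_self hs)]
  · rw [circleIntegral.integral_sub_zpow_of_ne hm, circleIntegral.integral_sub_zpow_of_ne hm]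

theorem circleIntegrable_mul_sub_zpow {g : ℂ → ℂ} {c u : ℂ} {R : ℝ} (hR : 0 ≤ R)
    (hg : ContinuousOn g (sphere c R)) (hu : u ∉ sphere c R) (m : ℤ) :
    CircleIntegrable (fun w => g w * (w - u) ^ m) c R :=
  ContinuousOn.circleIntegrable hR <| hg.mul fun w hw => by
    have hwu : w - u ≠ 0 := sub_ne_zero.2 (ne_of_mem_of_not_mem hw hu)
    exact ((continuous_sub_right u).continuousAt.zpow₀ m (Or.inl hwu)).continuousWithinAt

theorem circleIntegral_mul_sub_zpow_eq_zero {U : Set ℂ} {g : ℂ → ℂ} (hg : DifferentiableOn ℂ g U)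
    {c u : ℂ} {r : ℝ} (hr : 0 ≤ r) (hsub : closedBall c r ⊆ U) (hu : u ∉ closedBall c r) (m : ℤ) :
    (∮ w in C(c, r), g w * (w - u) ^ m) = 0 := by
  refine (DifferentiableOn.diffContOnCl_ball (fun w hw => ?_) subset_rfl).circleIntegral_eq_zero hr
  have hwu : w - u ≠ 0 := sub_ne_zero.2 (ne_of_mem_of_not_mem hw hu)
  exact ((hg w (hsub hw)).mul
    ((differentiableAt_id.sub_const u).zpow (Or.inl hwu)).differentiableWithinAt).mono hsub

theorem circleIntegral_mul_sub_inv_center {U : Set ℂ} {g : ℂ → ℂ} (hg : DifferentiableOn ℂ g U)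
    {u : ℂ} {s : ℝ} (hs : 0 < s) (hball : closedBall u s ⊆ U) :
    (∮ w in C(u, s), g w * (w - u)⁻¹) = 2 * π * I * g u := by
  rw [← smul_eq_mul (2 * π * I : ℂ), ← (hg.diffContOnCl_ball hball).circleIntegral_sub_inv_smul
    (mem_ball_self hs)]
  simp only [smul_eq_mul, mul_comm]

theorem circleIntegral_mul_sub_zpow_neg_succ {g : ℂ → ℂ} {a u : ℂ} {ρ : ℝ} (hρ : 0 ≤ ρ)
    (hg : ContinuousOn (dslope g u) (sphere a ρ)) (hu : u ∉ sphere a ρ) (B : ℕ) :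
    (∮ w in C(a, ρ), g w * (w - u) ^ (-((B + 1 : ℕ) : ℤ))) =
      (∮ w in C(a, ρ), dslope g u w * (w - u) ^ (-(B : ℤ))) +
        g u * ∮ w in C(a, ρ), (w - u) ^ (-((B + 1 : ℕ) : ℤ)) := by
  rw [← circleIntegral.integral_const_mul, ← circleIntegral.integral_add
    (circleIntegrable_mul_sub_zpow hρ hg hu _)
    (circleIntegrable_mul_sub_zpow hρ continuousOn_const hu _)]
  refine circleIntegral.integral_congr hρ fun w hw => ?_
  have hwu : w - u ≠ 0 := sub_ne_zero.2 (ne_of_mem_of_not_mem hw hu)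
  have hpow : (w - u) ^ (-(B : ℤ)) = (w - u) * (w - u) ^ (-((B + 1 : ℕ) : ℤ)) := by
    rw [← zpow_one_add₀ hwu]
    push_cast
    ring_nf
  have hslope : (w - u) * dslope g u w = g w - g u := sub_smul_dslope g u w
  rw [hpow]
  linear_combination (-(w - u) ^ (-((B + 1 : ℕ) : ℤ))) * hslope

theorem circleIntegral_mul_sub_zpow_eq_add {U : Set ℂ} (hU : IsOpen U) {g : ℂ → ℂ}
    (hg : DifferentiableOn ℂ g U) {c u : ℂ} {r R s : ℝ} (hr : 0 < r) (hs : 0 < s)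
    (hu : u ∈ ball c R \ closedBall c r) (hann : closedBall c R \ ball c r ⊆ U)
    (hball : closedBall u s ⊆ U) (B : ℕ) :
    (∮ w in C(c, R), g w * (w - u) ^ (-(B : ℤ))) =
      (∮ w in C(c, r), g w * (w - u) ^ (-(B : ℤ))) +
        ∮ w in C(u, s), g w * (w - u) ^ (-(B : ℤ)) := by
  obtain ⟨huR, hur⟩ := hu
  rw [mem_ball] at huR
  have hru : r < dist u c := not_le.1 hur
  have hsR : sphere c R ⊆ U := fun w hw =>
    hann ⟨sphere_subset_closedBall hw, fun h => by linarith [mem_sphere.1 hw, mem_ball.1 h]⟩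
  have hsr : sphere c r ⊆ U := fun w hw =>
    hann ⟨mem_closedBall.2 (by linarith [mem_sphere.1 hw]), fun h => by
      linarith [mem_sphere.1 hw, mem_ball.1 h]⟩
  -- Writing `g = g u + (w - u) • dslope g u` lowers the order of the pole at `u`; the pure pole
  -- `(w - u) ^ (-(B + 1))` integrates to the same value over `C(c, R)` and `C(u, s)`, and to `0`
  -- over `C(c, r)`.
  induction B generalizing g with
  | zero =>
    simp only [Nat.cast_zero, neg_zero, zpow_zero, mul_one]
    rw [circleIntegral_eq_of_differentiableOn_annulus hr (by linarith) (hg.mono hann),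
      (hg.diffContOnCl_ball hball).circleIntegral_eq_zero hs.le, add_zero]
  | succ B ih =>
    have hds : DifferentiableOn ℂ (dslope g u) U :=
      (differentiableOn_dslope (hU.mem_nhds (hball (mem_closedBall_self hs.le)))).2 hg
    have hpole_zero : (∮ w in C(c, r), (w - u) ^ (-((B + 1 : ℕ) : ℤ))) = 0 := by
      simpa using circleIntegral_mul_sub_zpow_eq_zero (differentiableOn_const (c := (1 : ℂ)))
        hr.le (subset_univ _) hur (-((B + 1 : ℕ) : ℤ))
    rw [circleIntegral_mul_sub_zpow_neg_succ (by linarith [dist_nonneg (x := u) (y := c)])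
        (hds.continuousOn.mono hsR) (fun h => by linarith [mem_sphere.1 h]),
      circleIntegral_mul_sub_zpow_neg_succ hr.le (hds.continuousOn.mono hsr)
        (fun h => by linarith [mem_sphere.1 h]),
      circleIntegral_mul_sub_zpow_neg_succ hs.le
        (hds.continuousOn.mono (sphere_subset_closedBall.trans hball))
        (fun h => hs.ne ((dist_self u).symm.trans (mem_sphere.1 h))),
      ih hds, circleIntegral_sub_zpow_eq_of_mem_ball _ (mem_ball.2 huR) hs, hpole_zero]
    ring

theorem circleIntegral_mul_sub_zpow_eq_add_of_compl_zero {g : ℂ → ℂ}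
    (hg : DifferentiableOn ℂ g {0}ᶜ) {u : ℂ} {r R s : ℝ} (hr : 0 < r) (hru : r < ‖u‖)
    (huR : ‖u‖ < R) (hs : 0 < s) (hsu : s < ‖u‖) (B : ℕ) :
    (∮ w in C(0, R), g w * (w - u) ^ (-(B : ℤ))) =
      (∮ w in C(0, r), g w * (w - u) ^ (-(B : ℤ))) +
        ∮ w in C(u, s), g w * (w - u) ^ (-(B : ℤ)) :=
  circleIntegral_mul_sub_zpow_eq_add isOpen_compl_singleton hg hr hs
    ⟨mem_ball_zero_iff.2 huR, by rw [mem_closedBall_zero_iff, not_le]; exact hru⟩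
    (fun w hw h => hw.2 (mem_singleton_iff.1 h ▸ mem_ball_self hr))
    (fun w hw h => by
      rw [mem_singleton_iff.1 h, mem_closedBall, dist_zero_left] at hw
      linarith)
    B

end CircleIntegrals

theorem sub_mul_sum_Icc_zpow_mul_zpow {K : Type*} [Field K] {X Y : K} (hX : X ≠ 0) (hY : Y ≠ 0)
    (m : ℤ) {M n : ℕ} (hMn : M ≤ n) :
    (X - Y) * ∑ k ∈ Finset.Icc (M + 1) n, X ^ (m - k) * Y ^ (-((n : ℤ) - k + 1)) =
      X ^ (m - M) * Y ^ (-((n : ℤ) - M)) - X ^ (m - n) := by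
  set f : ℕ → K := fun j => X ^ (m - j + 1) * Y ^ ((j : ℤ) - n - 1)
  have hterm : ∀ k : ℕ,
      (X - Y) * (X ^ (m - k) * Y ^ (-((n : ℤ) - k + 1))) = -(f (k + 1) - f k) := by
    intro k
    simp only [f]
    push_cast
    rw [show -((n : ℤ) - k + 1) = (k : ℤ) - n - 1 by ring,
      show m - ((k : ℤ) + 1) + 1 = m - k by ring,
      show (k : ℤ) + 1 - n - 1 = (k - n - 1) + 1 by ring, zpow_add_one₀ hX, zpow_add_one₀ hY]
    ring
  rw [Finset.mul_sum, Finset.sum_congr rfl fun k _ => hterm k, Finset.sum_neg_distrib,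
    ← Finset.Ico_add_one_right_eq_Icc, Finset.sum_Ico_sub f (by omega)]
  simp only [f]
  push_cast
  rw [show m - ((M : ℤ) + 1) + 1 = m - M by ring, show (M : ℤ) + 1 - n - 1 = -((n : ℤ) - M) by ring,
    show m - ((n : ℤ) + 1) + 1 = m - n by ring, show (n : ℤ) + 1 - n - 1 = 0 by ring, zpow_zero]
  ring

section K1Integrands

def PsiIntegrand (M n j : ℕ) (t : ℝ) (x : ℤ) (w : ℂ) : ℂ :=
  w⁻¹ * (w * (w - 1)) ^ ((n : ℤ) - (j : ℤ)) * Complex.exp ((t : ℂ) * w) *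
    w ^ (-(x + 2 * (n : ℤ) - 2 * (M : ℤ)))

def PhiIntegrand (M n j : ℕ) (t : ℝ) (x : ℤ) (v : ℂ) : ℂ :=
  (1 + 2 * v) * (1 + v) ^ (x + 2 * (n : ℤ) - 2 * (M : ℤ)) *
    Complex.exp (-((t : ℂ) * (v + 1))) * (v * (1 + v)) ^ (-((n : ℤ) - (j : ℤ) + 1))

def phiIntegrand (n₁ n₂ : ℕ) (t₁ t₂ : ℝ) (x₁ x₂ : ℤ) (w : ℂ) : ℂ :=
  w⁻¹ * Complex.exp (((t₁ - t₂ : ℝ) : ℂ) * w) * w ^ (-(x₁ + (n₁ : ℤ) - x₂ - (n₂ : ℤ))) *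
    (w - 1) ^ ((n₁ : ℤ) - (n₂ : ℤ))

def K1wFactor (M n₁ : ℕ) (t₁ : ℝ) (x₁ : ℤ) (w : ℂ) : ℂ :=
  w⁻¹ * Complex.exp ((t₁ : ℂ) * w) * (w * (w - 1)) ^ ((n₁ : ℤ) - (M : ℤ)) *
    w ^ (-(x₁ + 2 * (n₁ : ℤ) - 2 * (M : ℤ)))

def K1vFactor (M n₂ : ℕ) (t₂ : ℝ) (x₂ : ℤ) (v : ℂ) : ℂ :=
  (1 + v) ^ (x₂ + 2 * (n₂ : ℤ) - 2 * (M : ℤ)) * Complex.exp (-((t₂ : ℂ) * (v + 1))) *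
    (v * (v + 1)) ^ (-((n₂ : ℤ) - (M : ℤ)))

/-- The `(w(w-1))^(n₁-n₂)` end of the geometric sum over `k`; unlike `K1Int` it has no pole
at `v = 0`. -/
def K1Tail (M n₁ n₂ : ℕ) (t₁ t₂ : ℝ) (x₁ x₂ : ℤ) (v w : ℂ) : ℂ :=
  w⁻¹ * Complex.exp ((t₁ : ℂ) * w) * (w * (w - 1)) ^ ((n₁ : ℤ) - (n₂ : ℤ)) *
    w ^ (-(x₁ + 2 * (n₁ : ℤ) - 2 * (M : ℤ))) *
    (1 + v) ^ (x₂ + 2 * (n₂ : ℤ) - 2 * (M : ℤ)) * Complex.exp (-((t₂ : ℂ) * (v + 1))) *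
    (1 + 2 * v) / ((w + v) * (w - v - 1))

variable (M n₁ n₂ : ℕ) (t₁ t₂ : ℝ) (x₁ x₂ : ℤ)

theorem one_add_ne_zero_of_norm_lt_one {v : ℂ} (hv : ‖v‖ < 1) : 1 + v ≠ 0 := fun h => by
  rw [show v = -1 by linear_combination h, norm_neg, norm_one] at hv
  exact lt_irrefl _ hv

theorem differentiableAt_PsiIntegrand (j : ℕ) {w : ℂ} (hw : w ≠ 0) (hw1 : w - 1 ≠ 0) :
    DifferentiableAt ℂ (PsiIntegrand M n₁ j t₁ x₁) w := by
  have hX : w * (w - 1) ≠ 0 := mul_ne_zero hw hw1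
  unfold PsiIntegrand
  fun_prop (disch := first | assumption | exact Or.inl ‹_›)

theorem differentiableAt_PhiIntegrand (j : ℕ) {v : ℂ} (hv : v ≠ 0) (hv1 : 1 + v ≠ 0) :
    DifferentiableAt ℂ (PhiIntegrand M n₂ j t₂ x₂) v := by
  have hY : v * (1 + v) ≠ 0 := mul_ne_zero hv hv1
  unfold PhiIntegrand
  fun_prop (disch := first | assumption | exact Or.inl ‹_›)

theorem differentiableAt_phiIntegrand {w : ℂ} (hw : w ≠ 0) (hw1 : w - 1 ≠ 0) :
    DifferentiableAt ℂ (phiIntegrand n₁ n₂ t₁ t₂ x₁ x₂) w := by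
  unfold phiIntegrand
  fun_prop (disch := first | assumption | exact Or.inl ‹_›)

theorem differentiableAt_K1Int (hMn : M ≤ n₁) {v w : ℂ} (hw : w ≠ 0) (hwv : w + v ≠ 0)
    (hwv1 : w - v - 1 ≠ 0) : DifferentiableAt ℂ (K1Int M n₁ n₂ t₁ t₂ x₁ x₂ v) w := by
  have hexp : (0 : ℤ) ≤ (n₁ : ℤ) - (M : ℤ) := by omega
  have hD : (w + v) * (w - v - 1) ≠ 0 := mul_ne_zero hwv hwv1
  unfold K1Int
  fun_prop (disch := first | assumption | exact Or.inl ‹_› | exact Or.inr ‹_›)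

theorem K1Int_eq_K1vFactor_mul {v w : ℂ} (hwv : w + v ≠ 0) (hwv1 : w - v - 1 ≠ 0) :
    K1Int M n₁ n₂ t₁ t₂ x₁ x₂ v w = K1vFactor M n₂ t₂ x₂ v *
      (K1wFactor M n₁ t₁ x₁ w * (w - (v + 1))⁻¹ - K1wFactor M n₁ t₁ x₁ w * (w - -v)⁻¹) := by
  have h1 : w - (v + 1) ≠ 0 := by rwa [← sub_sub]
  have h2 : w - -v ≠ 0 := by rwa [sub_neg_eq_add]
  unfold K1Int K1vFactor K1wFactor
  field_simp
  ring

theorem K1vFactor_mul_K1wFactor_add_one {v : ℂ} (hv : v ≠ 0) (hv1 : 1 + v ≠ 0) :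
    K1vFactor M n₂ t₂ x₂ v * K1wFactor M n₁ t₁ x₁ (v + 1) =
      phiIntegrand n₁ n₂ t₁ t₂ x₁ x₂ (1 + v) := by
  unfold K1vFactor K1wFactor phiIntegrand
  rw [add_comm v 1, add_sub_cancel_left, mul_zpow v, mul_zpow (1 + v)]
  have hexp : Complex.exp (-((t₂ : ℂ) * (1 + v))) * Complex.exp ((t₁ : ℂ) * (1 + v)) =
      Complex.exp (((t₁ - t₂ : ℝ) : ℂ) * (1 + v)) := by
    rw [← Complex.exp_add]
    push_cast
    ring_nf
  have hpow₁ : (1 + v) ^ (x₂ + 2 * (n₂ : ℤ) - 2 * (M : ℤ)) * (1 + v) ^ (-((n₂ : ℤ) - (M : ℤ))) *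
      (1 + v) ^ ((n₁ : ℤ) - (M : ℤ)) * (1 + v) ^ (-(x₁ + 2 * (n₁ : ℤ) - 2 * (M : ℤ))) =
      (1 + v) ^ (-(x₁ + (n₁ : ℤ) - x₂ - (n₂ : ℤ))) := by
    simp only [← zpow_add₀ hv1]
    ring_nf
  have hpow₂ : v ^ (-((n₂ : ℤ) - (M : ℤ))) * v ^ ((n₁ : ℤ) - (M : ℤ)) =
      v ^ ((n₁ : ℤ) - (n₂ : ℤ)) := by
    rw [← zpow_add₀ hv]
    ring_nf
  rw [← hexp, ← hpow₁, ← hpow₂]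
  ring

theorem differentiableOn_K1wFactor (hMn : M ≤ n₁) :
    DifferentiableOn ℂ (K1wFactor M n₁ t₁ x₁) {0}ᶜ := by
  intro w hw
  have hw0 : w ≠ 0 := hw
  have hexp : (0 : ℤ) ≤ (n₁ : ℤ) - (M : ℤ) := by omega
  unfold K1wFactor
  fun_prop (disch := first | assumption | exact Or.inl ‹_› | exact Or.inr ‹_›)

theorem circleIntegral_K1Int_eq_K1vFactor_mul (hMn : M ≤ n₁) {v c : ℂ} {R : ℝ} (hR : 0 ≤ R)
    (h0 : (0 : ℂ) ∉ sphere c R) (hnv : -v ∉ sphere c R) (hv1 : v + 1 ∉ sphere c R) :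
    (∮ w in C(c, R), K1Int M n₁ n₂ t₁ t₂ x₁ x₂ v w) =
      K1vFactor M n₂ t₂ x₂ v * ((∮ w in C(c, R), K1wFactor M n₁ t₁ x₁ w * (w - (v + 1))⁻¹) -
        ∮ w in C(c, R), K1wFactor M n₁ t₁ x₁ w * (w - -v)⁻¹) := by
  have hcont : ContinuousOn (K1wFactor M n₁ t₁ x₁) (sphere c R) :=
    (differentiableOn_K1wFactor M n₁ t₁ x₁ hMn).continuousOn.mono
      fun w hw h => h0 (mem_singleton_iff.1 h ▸ hw)
  have hint : ∀ u ∉ sphere c R,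
      CircleIntegrable (fun w => K1wFactor M n₁ t₁ x₁ w * (w - u)⁻¹) c R := fun u hu => by
    simpa only [zpow_neg_one] using circleIntegrable_mul_sub_zpow hR hcont hu (-1)
  rw [← circleIntegral.integral_sub (hint _ hv1) (hint _ hnv),
    ← circleIntegral.integral_const_mul]
  refine circleIntegral.integral_congr hR fun w hw =>
    K1Int_eq_K1vFactor_mul M n₁ n₂ t₁ t₂ x₁ x₂ ?_ ?_
  · exact fun h => hnv (eq_neg_of_add_eq_zero_left h ▸ hw)
  · exact fun h => hv1 ((by linear_combination h : w = v + 1) ▸ hw)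

theorem norm_add_one_bounds {v : ℂ} {ρ : ℝ} (hv : ‖v‖ = ρ) :
    1 - ρ ≤ ‖v + 1‖ ∧ ‖v + 1‖ ≤ 1 + ρ ∧ 1 - 2 * ρ ≤ ‖v + 1 - -v‖ := by
  have h₁ := norm_sub_norm_le (1 : ℂ) (-v)
  have h₂ := norm_add_le v 1
  have h₃ := norm_sub_norm_le (1 : ℂ) (-(2 * v))
  rw [sub_neg_eq_add, norm_neg, norm_one, add_comm] at h₁
  rw [norm_one] at h₂
  rw [show (1 : ℂ) - -(2 * v) = v + 1 - -v by ring, norm_neg, norm_mul, hv, norm_one,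
    Complex.norm_two] at h₃
  refine ⟨by linarith, by linarith, by linarith⟩

theorem circleIntegral_K1Int_eq (hMn : M ≤ n₁) {v : ℂ} {ρ r : ℝ} (hv : ‖v‖ = ρ) (hr : 0 < r)
    (hrρ : r < ρ) (hρ : ρ < 1 / 4) :
    (∮ w in C(0, 2), K1Int M n₁ n₂ t₁ t₂ x₁ x₂ v w) =
      (∮ w in C(0, r), K1Int M n₁ n₂ t₁ t₂ x₁ x₂ v w) +
        (∮ w in C(-v, r), K1Int M n₁ n₂ t₁ t₂ x₁ x₂ v w) +
        2 * π * I * phiIntegrand n₁ n₂ t₁ t₂ x₁ x₂ (1 + v) := by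
  have hN := differentiableOn_K1wFactor M n₁ t₁ x₁ hMn
  have hv0 : v ≠ 0 := norm_pos_iff.1 (by linarith)
  have hv1 : 1 + v ≠ 0 := one_add_ne_zero_of_norm_lt_one (by linarith)
  obtain ⟨hnorm_lo, hnorm_hi, hnorm_2⟩ := norm_add_one_bounds hv
  have hpole₁ := circleIntegral_mul_sub_zpow_eq_add_of_compl_zero hN (u := v + 1) (R := 2) hr
    (by linarith) (by linarith) hr (by linarith) 1
  have hpole₂ := circleIntegral_mul_sub_zpow_eq_add_of_compl_zero hN (u := -v) (R := 2) hr
    (by rw [norm_neg]; linarith) (by rw [norm_neg]; linarith) hr (by rw [norm_neg]; linarith) 1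
  simp only [Nat.cast_one, zpow_neg_one] at hpole₁ hpole₂
  have hcauchy := circleIntegral_mul_sub_inv_center hN hr (u := v + 1) fun w hw h => by
    rw [mem_singleton_iff.1 h, mem_closedBall, dist_zero_left] at hw
    linarith
  have hgoursat : (∮ w in C(-v, r), K1wFactor M n₁ t₁ x₁ w * (w - (v + 1))⁻¹) = 0 := by
    have hsub : closedBall (-v) r ⊆ {0}ᶜ := fun w hw h => by
      rw [mem_singleton_iff.1 h, mem_closedBall, dist_eq_norm, zero_sub, neg_neg, hv] at hw
      linarith
    have hv1r : v + 1 ∉ closedBall (-v) r := fun h => by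
      rw [mem_closedBall, dist_eq_norm] at h
      linarith
    simpa only [zpow_neg_one] using circleIntegral_mul_sub_zpow_eq_zero hN hr.le hsub hv1r (-1)
  rw [circleIntegral_K1Int_eq_K1vFactor_mul M n₁ n₂ t₁ t₂ x₁ x₂ hMn zero_lt_two.le ?_ ?_ ?_,
    circleIntegral_K1Int_eq_K1vFactor_mul M n₁ n₂ t₁ t₂ x₁ x₂ hMn hr.le ?_ ?_ ?_,
    circleIntegral_K1Int_eq_K1vFactor_mul M n₁ n₂ t₁ t₂ x₁ x₂ hMn hr.le ?_ ?_ ?_, hpole₁, hpole₂,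
    hcauchy, hgoursat, ← K1vFactor_mul_K1wFactor_add_one M n₁ n₂ t₁ t₂ x₁ x₂ hv0 hv1]
  · ring
  all_goals
    intro h
    rw [mem_sphere, dist_eq_norm] at h
    try simp only [sub_zero, zero_sub, neg_neg, norm_neg, norm_zero, sub_self, hv] at h
    linarith

theorem sum_PsiIntegrand_mul_PhiIntegrand (hMn : M ≤ n₂) {v w : ℂ} (hv : v ≠ 0) (hv1 : 1 + v ≠ 0)
    (hw : w ≠ 0) (hw1 : w - 1 ≠ 0) (hwv : w + v ≠ 0) (hwv1 : w - v - 1 ≠ 0) :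
    ∑ k ∈ Finset.Icc (M + 1) n₂, PsiIntegrand M n₁ k t₁ x₁ w * PhiIntegrand M n₂ k t₂ x₂ v =
      K1Int M n₁ n₂ t₁ t₂ x₁ x₂ v w - K1Tail M n₁ n₂ t₁ t₂ x₁ x₂ v w := by
  have hgeom := sub_mul_sum_Icc_zpow_mul_zpow (mul_ne_zero hw hw1) (mul_ne_zero hv hv1) n₁ hMn
  rw [show w * (w - 1) - v * (1 + v) = (w + v) * (w - v - 1) by ring] at hgeom
  set S := ∑ k ∈ Finset.Icc (M + 1) n₂,
    (w * (w - 1)) ^ ((n₁ : ℤ) - k) * (v * (1 + v)) ^ (-((n₂ : ℤ) - k + 1))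
  set P := w⁻¹ * Complex.exp ((t₁ : ℂ) * w) * w ^ (-(x₁ + 2 * (n₁ : ℤ) - 2 * (M : ℤ))) *
    ((1 + 2 * v) * (1 + v) ^ (x₂ + 2 * (n₂ : ℤ) - 2 * (M : ℤ)) *
      Complex.exp (-((t₂ : ℂ) * (v + 1)))) with hP
  calc ∑ k ∈ Finset.Icc (M + 1) n₂, PsiIntegrand M n₁ k t₁ x₁ w * PhiIntegrand M n₂ k t₂ x₂ v
      = P * S := by
        rw [Finset.mul_sum]
        refine Finset.sum_congr rfl fun k _ => ?_
        unfold PsiIntegrand PhiIntegrand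
        ring
    _ = P * ((w + v) * (w - v - 1) * S) / ((w + v) * (w - v - 1)) := by
        field_simp [mul_ne_zero hwv hwv1]
    _ = K1Int M n₁ n₂ t₁ t₂ x₁ x₂ v w - K1Tail M n₁ n₂ t₁ t₂ x₁ x₂ v w := by
        rw [hgeom, hP]
        unfold K1Int K1Tail
        rw [show v * (v + 1) = v * (1 + v) by ring]
        ring

theorem K1Tail_factors_ne_zero {v w : ℂ} (hv : ‖v‖ < 1 / 2) (hw : ‖w‖ = 2) :
    w ≠ 0 ∧ w - 1 ≠ 0 ∧ 1 + v ≠ 0 ∧ w + v ≠ 0 ∧ w - v - 1 ≠ 0 := by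
  refine ⟨?_, ?_, ?_, ?_, ?_⟩ <;> intro h
  · rw [h, norm_zero] at hw; norm_num at hw
  · rw [show w = 1 by linear_combination h, norm_one] at hw; norm_num at hw
  · exact one_add_ne_zero_of_norm_lt_one (by linarith) h
  · rw [show w = -v by linear_combination h, norm_neg] at hw; linarith
  · have := norm_add_le v 1
    rw [show w = v + 1 by linear_combination h] at hw
    rw [norm_one] at this
    linarith

theorem continuousOn_K1Tail {ρ : ℝ} (hρ : ρ < 1 / 2) :
    ContinuousOn (Function.uncurry (K1Tail M n₁ n₂ t₁ t₂ x₁ x₂))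
      (closedBall 0 ρ ×ˢ sphere 0 2) := by
  rintro ⟨v, w⟩ ⟨hv, hw⟩
  rw [mem_closedBall_zero_iff] at hv
  rw [mem_sphere_zero_iff_norm] at hw
  obtain ⟨hw0, hw1, hv1, hwv, hwv1⟩ := K1Tail_factors_ne_zero (hv.trans_lt hρ) hw
  have hX : w * (w - 1) ≠ 0 := mul_ne_zero hw0 hw1
  have hD : (w + v) * (w - v - 1) ≠ 0 := mul_ne_zero hwv hwv1
  refine ContinuousAt.continuousWithinAt ?_
  show ContinuousAt (fun p : ℂ × ℂ => K1Tail M n₁ n₂ t₁ t₂ x₁ x₂ p.1 p.2) (v, w)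
  unfold K1Tail
  fun_prop (disch := first | assumption | exact Or.inl ‹_›)

theorem differentiableOn_K1Tail {ρ : ℝ} (hρ : ρ < 1 / 2) {w : ℂ} (hw : ‖w‖ = 2) :
    DifferentiableOn ℂ (fun v => K1Tail M n₁ n₂ t₁ t₂ x₁ x₂ v w) (closedBall 0 ρ) := by
  intro v hv
  rw [mem_closedBall_zero_iff] at hv
  obtain ⟨hw0, hw1, hv1, hwv, hwv1⟩ := K1Tail_factors_ne_zero (hv.trans_lt hρ) hw
  have hX : w * (w - 1) ≠ 0 := mul_ne_zero hw0 hw1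
  have hD : (w + v) * (w - v - 1) ≠ 0 := mul_ne_zero hwv hwv1
  refine DifferentiableAt.differentiableWithinAt ?_
  unfold K1Tail
  fun_prop (disch := first | assumption | exact Or.inl ‹_›)

theorem circleIntegral_circleIntegral_K1Tail_eq_zero {ρ : ℝ} (hρ0 : 0 < ρ) (hρ : ρ < 1 / 2) :
    (∮ v in C(0, ρ), ∮ w in C(0, 2), K1Tail M n₁ n₂ t₁ t₂ x₁ x₂ v w) = 0 := by
  have hinner : ∀ w ∈ sphere (0 : ℂ) 2, (∮ v in C(0, ρ), K1Tail M n₁ n₂ t₁ t₂ x₁ x₂ v w) = 0 :=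
    fun w hw => ((differentiableOn_K1Tail M n₁ n₂ t₁ t₂ x₁ x₂ hρ
      (mem_sphere_zero_iff_norm.1 hw)).diffContOnCl_ball subset_rfl).circleIntegral_eq_zero hρ0.le
  rw [circleIntegral_comm hρ0.le zero_le_two ((continuousOn_K1Tail M n₁ n₂ t₁ t₂ x₁ x₂ hρ).mono
    (prod_mono sphere_subset_closedBall subset_rfl)),
    circleIntegral.integral_congr zero_le_two hinner]
  simp [circleIntegral]

theorem Phi_eq_Phi_of_lt_one (j : ℕ) {r r' : ℝ} (hr : 0 < r) (hr' : 0 < r') (hr1 : r < 1)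
    (hr1' : r' < 1) : Phi M n₂ j t₂ r x₂ = Phi M n₂ j t₂ r' x₂ := by
  wlog h : r ≤ r' generalizing r r'
  · exact (this hr' hr hr1' hr1 (le_of_not_ge h)).symm
  unfold Phi
  congr 1
  refine (circleIntegral_eq_of_differentiableOn_annulus (f := PhiIntegrand M n₂ j t₂ x₂) hr h
    fun v ⟨hv, hv'⟩ => ?_).symm
  rw [mem_closedBall_zero_iff] at hv
  rw [mem_ball_zero_iff, not_lt] at hv'
  exact (differentiableAt_PhiIntegrand M n₂ t₂ x₂ j (norm_pos_iff.1 (by linarith))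
    (one_add_ne_zero_of_norm_lt_one (by linarith))).differentiableWithinAt

theorem phiHat_eq_circleIntegral_phiIntegrand {r : ℝ} (hr : 0 < r) :
    phiHat n₁ n₂ t₁ t₂ x₁ x₂ r =
      (2 * π * I)⁻¹ * ∮ w in C(0, r), phiIntegrand n₁ n₂ t₁ t₂ x₁ x₂ w := by
  unfold phiHat
  congr 1
  refine circleIntegral.integral_congr hr.le fun w hw => ?_
  have hw0 : w ≠ 0 := by rintro rfl; rw [mem_sphere_zero_iff_norm, norm_zero] at hw; linarith
  have hpow : w ^ ((n₁ : ℤ) - (n₂ : ℤ)) * w ^ (-(x₁ + 2 * (n₁ : ℤ) - x₂ - 2 * (n₂ : ℤ))) =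
      w ^ (-(x₁ + (n₁ : ℤ) - x₂ - (n₂ : ℤ))) := by
    rw [← zpow_add₀ hw0]
    ring_nf
  unfold phiIntegrand
  rw [mul_zpow, ← hpow]
  ring

theorem differentiableOn_phiIntegrand (h : n₂ ≤ n₁) :
    DifferentiableOn ℂ (phiIntegrand n₁ n₂ t₁ t₂ x₁ x₂) {0}ᶜ := by
  intro w hw
  have hw0 : w ≠ 0 := hw
  have hexp : (0 : ℤ) ≤ (n₁ : ℤ) - (n₂ : ℤ) := by omega
  unfold phiIntegrand
  fun_prop (disch := first | assumption | exact Or.inl ‹_› | exact Or.inr ‹_›)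

theorem circleIntegral_phiIntegrand_eq_add {r s : ℝ} (hr : 0 < r) (hr1 : r < 1) (hs : 0 < s)
    (hs1 : s < 1) :
    (∮ w in C(0, 2), phiIntegrand n₁ n₂ t₁ t₂ x₁ x₂ w) =
      (∮ w in C(0, r), phiIntegrand n₁ n₂ t₁ t₂ x₁ x₂ w) +
        ∮ w in C(1, s), phiIntegrand n₁ n₂ t₁ t₂ x₁ x₂ w := by
  obtain ⟨g, B, hg, hφ⟩ : ∃ (g : ℂ → ℂ) (B : ℕ), DifferentiableOn ℂ g {0}ᶜ ∧
      phiIntegrand n₁ n₂ t₁ t₂ x₁ x₂ = fun w => g w * (w - 1) ^ (-(B : ℤ)) := by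
    rcases le_total n₂ n₁ with h | h
    · exact ⟨_, 0, differentiableOn_phiIntegrand n₁ n₂ t₁ t₂ x₁ x₂ h, by simp⟩
    · refine ⟨fun w => w⁻¹ * Complex.exp (((t₁ - t₂ : ℝ) : ℂ) * w) *
        w ^ (-(x₁ + (n₁ : ℤ) - x₂ - (n₂ : ℤ))), n₂ - n₁, fun w hw => ?_, ?_⟩
      · have hw0 : w ≠ 0 := hw
        fun_prop (disch := first | assumption | exact Or.inl ‹_›)
      · funext w
        rw [phiIntegrand, Nat.cast_sub h, show -((n₂ : ℤ) - n₁) = (n₁ : ℤ) - n₂ by ring]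
  rw [hφ]
  exact circleIntegral_mul_sub_zpow_eq_add_of_compl_zero hg hr (by rwa [norm_one])
    (by norm_num) hs (by rwa [norm_one]) B

theorem phi_sub_phiHat {r s : ℝ} (hr : 0 < r) (hr1 : r < 1) (hs : 0 < s) (hs1 : s < 1) :
    phi n₁ n₂ t₁ t₂ x₁ x₂ - phiHat n₁ n₂ t₁ t₂ x₁ x₂ r =
      (2 * π * I)⁻¹ * ∮ w in C(1, s), phiIntegrand n₁ n₂ t₁ t₂ x₁ x₂ w := by
  rw [phiHat_eq_circleIntegral_phiIntegrand n₁ n₂ t₁ t₂ x₁ x₂ hr,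
    show phi n₁ n₂ t₁ t₂ x₁ x₂ = (2 * π * I)⁻¹ * ∮ w in C(0, 2), phiIntegrand n₁ n₂ t₁ t₂ x₁ x₂ w
      from rfl, circleIntegral_phiIntegrand_eq_add n₁ n₂ t₁ t₂ x₁ x₂ hr hr1 hs hs1]
  ring

theorem phi_eq_phiHat_of_le (h : n₂ ≤ n₁) {r : ℝ} (hr : 0 < r) (hr1 : r < 1) :
    phi n₁ n₂ t₁ t₂ x₁ x₂ = phiHat n₁ n₂ t₁ t₂ x₁ x₂ r := by
  have hsub : closedBall (1 : ℂ) (1 / 2) ⊆ {0}ᶜ := fun w hw h => by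
    rw [mem_singleton_iff.1 h, mem_closedBall, dist_zero_left, norm_one] at hw
    norm_num at hw
  rw [← sub_eq_zero, phi_sub_phiHat n₁ n₂ t₁ t₂ x₁ x₂ hr hr1 (s := 1 / 2) (by norm_num)
    (by norm_num), ((differentiableOn_phiIntegrand n₁ n₂ t₁ t₂ x₁ x₂ h).diffContOnCl_ball
      hsub).circleIntegral_eq_zero (by norm_num), mul_zero]

theorem sum_Psi_mul_eq_circleIntegral (s : Finset ℕ) (a : ℕ → ℂ) :
    ∑ k ∈ s, Psi M n₁ k t₁ x₁ * a k =
      (2 * π * I)⁻¹ * ∮ w in C(0, 2), ∑ k ∈ s, PsiIntegrand M n₁ k t₁ x₁ w * a k := by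
  have hint : ∀ k ∈ s, CircleIntegrable (fun w => PsiIntegrand M n₁ k t₁ x₁ w * a k) 0 2 :=
    fun k _ => ContinuousOn.circleIntegrable zero_le_two <| ContinuousOn.mul (fun w hw => by
      rw [mem_sphere_zero_iff_norm] at hw
      refine (differentiableAt_PsiIntegrand M n₁ t₁ x₁ k (norm_pos_iff.1 (by linarith))
        (sub_ne_zero.2 ?_)).continuousAt.continuousWithinAt
      rintro rfl
      norm_num at hw) continuousOn_const
  rw [circleIntegral.integral_fun_sum hint, Finset.mul_sum]
  refine Finset.sum_congr rfl fun k _ => ?_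
  have h := circleIntegral.integral_smul_const (PsiIntegrand M n₁ k t₁ x₁) (a k) 0 2
  simp only [smul_eq_mul] at h
  rw [h, ← mul_assoc]
  rfl

theorem circleIntegrable_PhiIntegrand (j : ℕ) {r : ℝ} (hr : 0 < r) (hr1 : r < 1) :
    CircleIntegrable (PhiIntegrand M n₂ j t₂ x₂) 0 r :=
  ContinuousOn.circleIntegrable hr.le fun v hv => by
    rw [mem_sphere_zero_iff_norm] at hv
    exact (differentiableAt_PhiIntegrand M n₂ t₂ x₂ j (norm_pos_iff.1 (by linarith))
      (one_add_ne_zero_of_norm_lt_one (by linarith))).continuousAt.continuousWithinAt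

theorem sum_mul_Phi_eq_circleIntegral (s : Finset ℕ) (b : ℕ → ℂ) {r : ℝ} (hr : 0 < r)
    (hr1 : r < 1) :
    ∑ k ∈ s, b k * Phi M n₂ k t₂ r x₂ =
      (2 * π * I)⁻¹ * ∮ v in C(0, r), ∑ k ∈ s, b k * PhiIntegrand M n₂ k t₂ x₂ v := by
  have hint : ∀ k ∈ s, CircleIntegrable (fun v => b k * PhiIntegrand M n₂ k t₂ x₂ v) 0 r :=
    fun k _ => (circleIntegrable_PhiIntegrand M n₂ t₂ x₂ k hr hr1).const_mul (b k)
  rw [circleIntegral.integral_fun_sum hint, Finset.mul_sum]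
  refine Finset.sum_congr rfl fun k _ => ?_
  rw [circleIntegral.integral_const_mul]
  rw [show Phi M n₂ k t₂ r x₂ = (2 * π * I)⁻¹ * ∮ v in C(0, r), PhiIntegrand M n₂ k t₂ x₂ v
    from rfl]
  ring

theorem sum_Psi_mul_PhiIntegrand (hn₁ : M ≤ n₁) (hn₂ : M ≤ n₂) {v : ℂ} {ρ r : ℝ} (hv : ‖v‖ = ρ)
    (hr : 0 < r) (hrρ : r < ρ) (hρ : ρ < 1 / 4) :
    ∑ k ∈ Finset.Icc (M + 1) n₂, Psi M n₁ k t₁ x₁ * PhiIntegrand M n₂ k t₂ x₂ v =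
      (2 * π * I)⁻¹ * ((∮ w in C(0, r), K1Int M n₁ n₂ t₁ t₂ x₁ x₂ v w) +
          ∮ w in C(-v, r), K1Int M n₁ n₂ t₁ t₂ x₁ x₂ v w) +
        phiIntegrand n₁ n₂ t₁ t₂ x₁ x₂ (1 + v) -
        (2 * π * I)⁻¹ * ∮ w in C(0, 2), K1Tail M n₁ n₂ t₁ t₂ x₁ x₂ v w := by
  have hv0 : v ≠ 0 := norm_pos_iff.1 (by linarith)
  have hsphere : ∀ w ∈ sphere (0 : ℂ) 2,
      w ≠ 0 ∧ w - 1 ≠ 0 ∧ 1 + v ≠ 0 ∧ w + v ≠ 0 ∧ w - v - 1 ≠ 0 :=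
    fun w hw => K1Tail_factors_ne_zero (by linarith) (mem_sphere_zero_iff_norm.1 hw)
  have hTail : CircleIntegrable (K1Tail M n₁ n₂ t₁ t₂ x₁ x₂ v) 0 2 :=
    ((continuousOn_K1Tail M n₁ n₂ t₁ t₂ x₁ x₂ (ρ := ρ) (by linarith)).comp
      (continuousOn_const.prodMk continuousOn_id)
      fun w hw => ⟨mem_closedBall_zero_iff.2 hv.le, hw⟩).circleIntegrable zero_le_two
  have hK1 : CircleIntegrable (K1Int M n₁ n₂ t₁ t₂ x₁ x₂ v) 0 2 :=
    ContinuousOn.circleIntegrable zero_le_two fun w hw =>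
      (differentiableAt_K1Int M n₁ n₂ t₁ t₂ x₁ x₂ hn₁ (hsphere w hw).1 (hsphere w hw).2.2.2.1
        (hsphere w hw).2.2.2.2).continuousAt.continuousWithinAt
  have hsum : (∮ w in C(0, 2), ∑ k ∈ Finset.Icc (M + 1) n₂,
      PsiIntegrand M n₁ k t₁ x₁ w * PhiIntegrand M n₂ k t₂ x₂ v) =
      (∮ w in C(0, 2), K1Int M n₁ n₂ t₁ t₂ x₁ x₂ v w) -
        ∮ w in C(0, 2), K1Tail M n₁ n₂ t₁ t₂ x₁ x₂ v w := by
    rw [← circleIntegral.integral_sub hK1 hTail]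
    refine circleIntegral.integral_congr zero_le_two fun w hw => ?_
    obtain ⟨hw0, hw1, hv1, hwv, hwv1⟩ := hsphere w hw
    exact sum_PsiIntegrand_mul_PhiIntegrand M n₁ n₂ t₁ t₂ x₁ x₂ hn₂ hv0 hv1 hw0 hw1 hwv hwv1
  rw [sum_Psi_mul_eq_circleIntegral, hsum,
    circleIntegral_K1Int_eq M n₁ n₂ t₁ t₂ x₁ x₂ hn₁ hv hr hrρ hρ]
  linear_combination phiIntegrand n₁ n₂ t₁ t₂ x₁ x₂ (1 + v) * inv_mul_cancel₀ two_pi_I_ne_zero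

theorem circleIntegrable_phiIntegrand_one_add {r : ℝ} (hr : 0 < r) (hr1 : r < 1) :
    CircleIntegrable (fun v => phiIntegrand n₁ n₂ t₁ t₂ x₁ x₂ (1 + v)) 0 r :=
  ContinuousOn.circleIntegrable hr.le fun v hv => by
    rw [mem_sphere_zero_iff_norm] at hv
    refine ((differentiableAt_phiIntegrand n₁ n₂ t₁ t₂ x₁ x₂
      (one_add_ne_zero_of_norm_lt_one (by linarith)) ?_).comp v
      ((differentiableAt_const 1).add differentiableAt_id)).continuousAt.continuousWithinAt
    rw [add_sub_cancel_left]
    exact norm_pos_iff.1 (by linarith)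

theorem sum_Psi_mul_Phi_eq (hn₁ : M ≤ n₁) (hn₂ : M ≤ n₂) {r0 rz rv rw : ℝ} (hr0 : 0 < r0)
    (hr0' : r0 < 1) (hrz : 0 < rz) (hrz' : rz < 1) (hrw : 0 < rw) (hrwv : rw < rv)
    (hrv : rv < 1 / 4) :
    ∑ k ∈ Finset.Icc (M + 1) n₂, Psi M n₁ k t₁ x₁ * Phi M n₂ k t₂ rz x₂ =
      (2 * π * I)⁻¹ * (∮ v in C(0, rv), (2 * π * I)⁻¹ *
          ((∮ w in C(0, rw), K1Int M n₁ n₂ t₁ t₂ x₁ x₂ v w) +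
            ∮ w in C(-v, rw), K1Int M n₁ n₂ t₁ t₂ x₁ x₂ v w)) +
        (phi n₁ n₂ t₁ t₂ x₁ x₂ - phiHat n₁ n₂ t₁ t₂ x₁ x₂ r0) := by
  have hrv0 : 0 < rv := hrw.trans hrwv
  set S := fun v => ∑ k ∈ Finset.Icc (M + 1) n₂, Psi M n₁ k t₁ x₁ * PhiIntegrand M n₂ k t₂ x₂ v
  have hS : CircleIntegrable S 0 rv := CircleIntegrable.fun_sum _ fun k _ =>
    (circleIntegrable_PhiIntegrand M n₂ t₂ x₂ k hrv0 (by linarith)).const_mul _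
  have hφ := circleIntegrable_phiIntegrand_one_add n₁ n₂ t₁ t₂ x₁ x₂ hrv0 (by linarith)
  have hT : CircleIntegrable
      (fun v => (2 * π * I)⁻¹ * ∮ w in C(0, 2), K1Tail M n₁ n₂ t₁ t₂ x₁ x₂ v w) 0 rv :=
    (circleIntegrable_circleIntegral hrv0.le zero_le_two
      ((continuousOn_K1Tail M n₁ n₂ t₁ t₂ x₁ x₂ (ρ := rv) (by linarith)).mono
        (prod_mono sphere_subset_closedBall subset_rfl))).const_mul _
  have hSφ : CircleIntegrable (fun v => S v - phiIntegrand n₁ n₂ t₁ t₂ x₁ x₂ (1 + v)) 0 rv :=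
    hS.sub hφ
  have hsplit : (∮ v in C(0, rv), (2 * π * I)⁻¹ *
      ((∮ w in C(0, rw), K1Int M n₁ n₂ t₁ t₂ x₁ x₂ v w) +
        ∮ w in C(-v, rw), K1Int M n₁ n₂ t₁ t₂ x₁ x₂ v w)) =
      (∮ v in C(0, rv), S v) - (∮ v in C(0, rv), phiIntegrand n₁ n₂ t₁ t₂ x₁ x₂ (1 + v)) +
        ∮ v in C(0, rv), (2 * π * I)⁻¹ * ∮ w in C(0, 2), K1Tail M n₁ n₂ t₁ t₂ x₁ x₂ v w := by
    rw [← circleIntegral.integral_sub hS hφ, ← circleIntegral.integral_add hSφ hT]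
    refine circleIntegral.integral_congr hrv0.le fun v hv => ?_
    simp only [S]
    rw [sum_Psi_mul_PhiIntegrand M n₁ n₂ t₁ t₂ x₁ x₂ hn₁ hn₂ (mem_sphere_zero_iff_norm.1 hv) hrw
      hrwv hrv]
    ring
  rw [Finset.sum_congr rfl fun k _ => by
      rw [Phi_eq_Phi_of_lt_one M n₂ t₂ x₂ k hrz hrv0 hrz' (by linarith)],
    sum_mul_Phi_eq_circleIntegral M n₂ t₂ x₂ _ _ hrv0 (by linarith), hsplit,
    circleIntegral.integral_const_mul,
    circleIntegral_circleIntegral_K1Tail_eq_zero M n₁ n₂ t₁ t₂ x₁ x₂ hrv0 (by linarith),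
    circleIntegral_comp_add_left (phiIntegrand n₁ n₂ t₁ t₂ x₁ x₂) 1 rv,
    phi_sub_phiHat n₁ n₂ t₁ t₂ x₁ x₂ hr0 hr0' hrv0 (by linarith)]
  ring

end K1Integrands

theorem K1_double_integral_representation_general
    (M : ℕ) (t₁ t₂ : ℝ) (n₁ n₂ : ℕ) (hn₁ : M + 1 ≤ n₁) (hn₂ : M + 1 ≤ n₂) (x₁ x₂ : ℤ)
    (hord : n₂ ≤ n₁ ∨ (n₁ ≤ n₂ ∧ t₂ ≤ t₁)) :
    ∃ ε > 0, ∀ r0 rz rv rw : ℝ,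
      0 < r0 → r0 < ε → 0 < rz → rz < ε → 0 < rw → rw < rv → rv < ε →
      (-(if n₁ ≤ n₂ ∧ t₂ ≤ t₁ ∧ ¬(n₁ = n₂ ∧ t₁ = t₂) then (1 : ℂ) else 0) *
          phi n₁ n₂ t₁ t₂ x₁ x₂ +
        ∑ k ∈ Finset.Icc (M + 1) n₂, Psi M n₁ k t₁ x₁ * Phi M n₂ k t₂ rz x₂) =
      (-(if n₁ ≤ n₂ ∧ t₂ ≤ t₁ ∧ ¬(n₁ = n₂ ∧ t₁ = t₂) then (1 : ℂ) else 0) *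
          phiHat n₁ n₂ t₁ t₂ x₁ x₂ r0 +
        (2 * (π : ℂ) * I)⁻¹ * ∮ v in C((0 : ℂ), rv),
          (2 * (π : ℂ) * I)⁻¹ *
            ((∮ w in C((0 : ℂ), rw), K1Int M n₁ n₂ t₁ t₂ x₁ x₂ v w) +
             (∮ w in C(-v, rw), K1Int M n₁ n₂ t₁ t₂ x₁ x₂ v w))) := by
  refine ⟨1 / 4, by norm_num, fun r0 rz rv rw hr0 hr0' hrz hrz' hrw hrwv hrv => ?_⟩
  rw [sum_Psi_mul_Phi_eq M n₁ n₂ t₁ t₂ x₁ x₂ (by omega) (by omega) hr0 (by linarith) hrz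
    (by linarith) hrw hrwv hrv]
  split_ifs with hind
  · ring
  · have hle : n₂ ≤ n₁ := by
      rcases hord with h | ⟨h, ht⟩
      · exact h
      · by_contra hlt
        exact hind ⟨h, ht, fun he => hlt he.1.ge⟩
    rw [phi_eq_phiHat_of_le n₁ n₂ t₁ t₂ x₁ x₂ hle hr0 (by linarith)]
    ring

/-- `-𝟙·φ + ∑_{k=M+1}^{n₂} Ψ^{n₁,t₁}_{n₁-k}(x₁) Φ^{n₂,t₂}_{n₂-k}(x₂) = -𝟙·φ̂ + K̂^{(1)}`:
the double contour integral has the `v`-contour enclosing exactly `0` and, for each `v`,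
the `w`-contour enclosing exactly `0` and `-v` (in particular not `w = v+1`). -/
theorem K1_double_integral_representation
    (M : ℕ) (hM : 1 ≤ M) (α : ℝ) (hα0 : 0 < α) (hα1 : α < 1)
    (t₁ t₂ : ℝ) (ht₁ : 0 ≤ t₁) (ht₂ : 0 ≤ t₂)
    (n₁ n₂ : ℕ) (hn₁ : M + 1 ≤ n₁) (hn₂ : M + 1 ≤ n₂) (x₁ x₂ : ℤ)
    (hord : n₂ ≤ n₁ ∨ (n₁ ≤ n₂ ∧ t₂ ≤ t₁)) :
    ∃ ε > 0, ∀ r0 rz rv rw : ℝ,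
      0 < r0 → r0 < ε → 0 < rz → rz < ε → 0 < rw → rw < rv → rv < ε →
      (-(if n₁ ≤ n₂ ∧ t₂ ≤ t₁ ∧ ¬(n₁ = n₂ ∧ t₁ = t₂) then (1 : ℂ) else 0) *
          phi n₁ n₂ t₁ t₂ x₁ x₂ +
        ∑ k ∈ Finset.Icc (M + 1) n₂, Psi M n₁ k t₁ x₁ * Phi M n₂ k t₂ rz x₂) =
      (-(if n₁ ≤ n₂ ∧ t₂ ≤ t₁ ∧ ¬(n₁ = n₂ ∧ t₁ = t₂) then (1 : ℂ) else 0) *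
          phiHat n₁ n₂ t₁ t₂ x₁ x₂ r0 +
        (2 * (π : ℂ) * I)⁻¹ * ∮ v in C((0 : ℂ), rv),
          (2 * (π : ℂ) * I)⁻¹ *
            ((∮ w in C((0 : ℂ), rw), K1Int M n₁ n₂ t₁ t₂ x₁ x₂ v w) +
             (∮ w in C(-v, rw), K1Int M n₁ n₂ t₁ t₂ x₁ x₂ v w))) :=
  K1_double_integral_representation_general M t₁ t₂ n₁ n₂ hn₁ hn₂ x₁ x₂ hord
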